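/- arXiv:2510.25681 — 2 statements merged into one kernel-verified Lean document; each statement's English description precedes it below -/
import Mathlib

section
/- Let ω be a homogeneous polynomial of degree k, ℓ a linear form, and f = ω·ℓ^{d-k} ∈ S_d with d ≥ k. If ℓ does not divide ω, then the subspace W = span{θ ℓ^{d-k} : θ ∈ S_k} ∩ span{ω λ ℓ^{d-k-1} : λ ∈ S_1} is one-dimensional; if ℓ divides ω, then dim W = n+1. -/
/-!
Write `d - k = e + 1`. An element of `W` is `θ ℓ^(e+1) = ω λ ℓ^e`, i.e. `θ ℓ = ω λ`.
A nonzero linear form is prime, so if `ℓ ∤ ω` then `ℓ ∣ λ`; by degree `λ ∈ K ℓ`, and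
`W = K · ω ℓ^(e+1)`. If `ω = ℓ w`, then `ω λ ℓ^e = (w λ) ℓ^(e+1)` with `w λ ∈ S_k`, so `W` is
the image of `S_1` under the injective map `λ ↦ ω λ ℓ^e`, of dimension `n + 1`.
-/

namespace MvPolynomial

variable {σ R K : Type*}

section CommSemiring

variable [CommSemiring R] {φ ψ : MvPolynomial σ R} {m n : ℕ}

attribute [local instance] gradedAlgebra in
theorem homogeneousComponent_mul_of_isHomogeneous_left (hφ : φ.IsHomogeneous m) (j : ℕ) :
    homogeneousComponent (m + j) (φ * ψ) = φ * homogeneousComponent j ψ := by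
  simp only [← decomposition.decompose'_apply]
  exact DirectSum.coe_decompose_mul_add_of_left_mem (homogeneousSubmodule σ R) (j := j)
    ((mem_homogeneousSubmodule m φ).mpr hφ)

theorem IsHomogeneous.of_mul_left [NoZeroDivisors R] (hφ : φ.IsHomogeneous m) (hφ0 : φ ≠ 0)
    (h : (φ * ψ).IsHomogeneous (m + n)) : ψ.IsHomogeneous n := by
  intro d hd
  change (Finsupp.weight fun _ => 1) d = n
  rw [← Finsupp.degree_eq_weight_one]
  have hcomp : homogeneousComponent d.degree ψ ≠ 0 := fun h0 => hd <| by
    simpa [coeff_homogeneousComponent] using congr_arg (coeff d) h0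
  have hprod : homogeneousComponent (m + d.degree) (φ * ψ) ≠ 0 := by
    rw [homogeneousComponent_mul_of_isHomogeneous_left hφ]
    exact mul_ne_zero hφ0 hcomp
  by_contra hne
  rw [homogeneousComponent_of_mem h, if_neg (by omega)] at hprod
  exact hprod rfl

theorem span_setOf_isHomogeneous_eq_map {M : Type*} [AddCommMonoid M] [Module R M] (m : ℕ)
    (f : MvPolynomial σ R →ₗ[R] M) :
    Submodule.span R {p | ∃ θ : MvPolynomial σ R, θ.IsHomogeneous m ∧ p = f θ} =
      (homogeneousSubmodule σ R m).map f := by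
  conv_rhs => rw [← Submodule.span_eq (homogeneousSubmodule σ R m), ← Submodule.span_image]
  congr 1
  ext p
  simp [mem_homogeneousSubmodule, eq_comm]

end CommSemiring

section Field

variable [Field K]

theorem prime_of_totalDegree_eq_one {p : MvPolynomial σ K} (hp : p.totalDegree = 1) : Prime p := by
  refine (irreducible_of_totalDegree_eq_one hp fun x hx => ?_).prime
  obtain ⟨d, hd⟩ := exists_coeff_ne_zero (p := p) (by rintro rfl; simp at hp)
  exact isUnit_iff_ne_zero.mpr (by rintro rfl; exact hd (zero_dvd_iff.mp (hx d)))

theorem finrank_homogeneousSubmodule_one [Fintype σ] :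
    Module.finrank K (homogeneousSubmodule σ K 1) = Fintype.card σ := by
  rw [homogeneousSubmodule_one_eq_span_X, finrank_span_eq_card (linearIndependent_X σ K)]

variable {ω ℓ θ lam : MvPolynomial σ K} {k e : ℕ}

theorem exists_eq_C_mul_of_mul_eq_mul (hℓ : ℓ.IsHomogeneous 1) (hℓ0 : ℓ ≠ 0)
    (hlam : lam.IsHomogeneous 1) (hnd : ¬ ℓ ∣ ω) (h : θ * ℓ = ω * lam) : ∃ c, lam = C c * ℓ := by
  have hprime := prime_of_totalDegree_eq_one (hℓ.totalDegree hℓ0)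
  obtain ⟨q, rfl⟩ := (hprime.dvd_or_dvd ⟨θ, by rw [← h, mul_comm]⟩).resolve_left hnd
  have hq : q.IsHomogeneous 0 := hℓ.of_mul_left hℓ0 hlam
  rw [totalDegree_eq_zero_iff_eq_C.mp (Nat.le_zero.mp hq.totalDegree_le)]
  exact ⟨_, mul_comm _ _⟩

theorem map_mulRight_inf_map_eq_span_singleton (hω : ω.IsHomogeneous k) (hℓ : ℓ.IsHomogeneous 1)
    (hℓ0 : ℓ ≠ 0) (hnd : ¬ ℓ ∣ ω) :
    (homogeneousSubmodule σ K k).map (LinearMap.mulRight K (ℓ ^ (e + 1))) ⊓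
      (homogeneousSubmodule σ K 1).map (LinearMap.mulRight K (ℓ ^ e) ∘ₗ LinearMap.mulLeft K ω) =
      K ∙ (ω * ℓ ^ (e + 1)) := by
  apply le_antisymm
  · rintro p ⟨⟨θ, -, rfl⟩, lam, hlam, hp⟩
    simp only [LinearMap.comp_apply, LinearMap.mulLeft_apply, LinearMap.mulRight_apply] at hp ⊢
    have h : θ * ℓ = ω * lam :=
      mul_right_cancel₀ (pow_ne_zero e hℓ0) (by linear_combination -hp)
    obtain ⟨c, rfl⟩ := exists_eq_C_mul_of_mul_eq_mul hℓ hℓ0 hlam hnd h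
    exact Submodule.mem_span_singleton.mpr ⟨c, by rw [smul_eq_C_mul, ← hp]; ring⟩
  · rw [Submodule.span_singleton_le_iff_mem]
    refine ⟨⟨ω, hω, rfl⟩, ℓ, hℓ, ?_⟩
    simp only [LinearMap.comp_apply, LinearMap.mulLeft_apply, LinearMap.mulRight_apply]
    ring

theorem map_comp_mulLeft_le_map_mulRight_of_dvd (hω : ω.IsHomogeneous k) (hℓ : ℓ.IsHomogeneous 1)
    (hℓ0 : ℓ ≠ 0) (hdvd : ℓ ∣ ω) :
    (homogeneousSubmodule σ K 1).map (LinearMap.mulRight K (ℓ ^ e) ∘ₗ LinearMap.mulLeft K ω) ≤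
      (homogeneousSubmodule σ K k).map (LinearMap.mulRight K (ℓ ^ (e + 1))) := by
  obtain ⟨w, rfl⟩ := hdvd
  rintro p ⟨lam, hlam, rfl⟩
  have hwlam : (w * lam).IsHomogeneous k := by
    refine hℓ.of_mul_left hℓ0 ?_
    rw [← mul_assoc, add_comm]
    exact hω.mul hlam
  refine ⟨w * lam, hwlam, ?_⟩
  simp only [LinearMap.comp_apply, LinearMap.mulLeft_apply, LinearMap.mulRight_apply]
  ring

theorem finrank_map_comp_mulLeft [Fintype σ] (hω0 : ω ≠ 0) (hℓ0 : ℓ ≠ 0) :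
    Module.finrank K
      ((homogeneousSubmodule σ K 1).map (LinearMap.mulRight K (ℓ ^ e) ∘ₗ LinearMap.mulLeft K ω)) =
      Fintype.card σ := by
  have hinj : Function.Injective (LinearMap.mulRight K (ℓ ^ e) ∘ₗ LinearMap.mulLeft K ω) :=
    (mul_left_injective₀ (pow_ne_zero e hℓ0)).comp (mul_right_injective₀ hω0)
  rw [← (Submodule.equivMapOfInjective _ hinj _).finrank_eq, finrank_homogeneousSubmodule_one]

end Field

end MvPolynomial

open MvPolynomial

theorem osculating_intersection_dim_general {K : Type*} [Field K]
    {n d k : ℕ} (hkd : k < d) (ω ℓ : MvPolynomial (Fin (n + 1)) K)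
    (hω : ω.IsHomogeneous k) (hℓ : ℓ.IsHomogeneous 1) (hω0 : ω ≠ 0) (hℓ0 : ℓ ≠ 0) :
    (¬ ℓ ∣ ω →
      Module.finrank K ↥(
        Submodule.span K {p : MvPolynomial (Fin (n + 1)) K |
            ∃ θ : MvPolynomial (Fin (n + 1)) K, θ.IsHomogeneous k ∧ p = θ * ℓ ^ (d - k)} ⊓
        Submodule.span K {p : MvPolynomial (Fin (n + 1)) K |
            ∃ lam : MvPolynomial (Fin (n + 1)) K, lam.IsHomogeneous 1 ∧
              p = ω * lam * ℓ ^ (d - k - 1)}) = 1) ∧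
    (ℓ ∣ ω →
      Module.finrank K ↥(
        Submodule.span K {p : MvPolynomial (Fin (n + 1)) K |
            ∃ θ : MvPolynomial (Fin (n + 1)) K, θ.IsHomogeneous k ∧ p = θ * ℓ ^ (d - k)} ⊓
        Submodule.span K {p : MvPolynomial (Fin (n + 1)) K |
            ∃ lam : MvPolynomial (Fin (n + 1)) K, lam.IsHomogeneous 1 ∧
              p = ω * lam * ℓ ^ (d - k - 1)}) = n + 1) := by
  obtain ⟨e, he⟩ : ∃ e, d - k = e + 1 := ⟨d - k - 1, by omega⟩
  rw [show d - k - 1 = e by omega, he]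
  have hA := span_setOf_isHomogeneous_eq_map k (LinearMap.mulRight K (ℓ ^ (e + 1)))
  have hB := span_setOf_isHomogeneous_eq_map 1
    (LinearMap.mulRight K (ℓ ^ e) ∘ₗ LinearMap.mulLeft K ω)
  simp only [LinearMap.comp_apply, LinearMap.mulLeft_apply, LinearMap.mulRight_apply] at hA hB
  rw [hA, hB]
  refine ⟨fun hnd => ?_, fun hdvd => ?_⟩
  · rw [map_mulRight_inf_map_eq_span_singleton hω hℓ hℓ0 hnd,
      finrank_span_singleton (mul_ne_zero hω0 (pow_ne_zero _ hℓ0))]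
  · rw [inf_eq_right.mpr (map_comp_mulLeft_le_map_mulRight_of_dvd hω hℓ hℓ0 hdvd),
      finrank_map_comp_mulLeft hω0 hℓ0, Fintype.card_fin]

/-- For `f = ω ℓ^{d-k}` with `ω` homogeneous of degree `k < d` and `ℓ`
a linear form, the subspace
`W = span{θ ℓ^{d-k} : θ ∈ S_k} ⊓ span{ω λ ℓ^{d-k-1} : λ ∈ S_1}`
is one-dimensional if `ℓ ∤ ω`, and has dimension `n + 1` if `ℓ ∣ ω`. -/
theorem osculating_intersection_dim {K : Type*} [Field K] [CharZero K]
    {n d k : ℕ} (hkd : k < d) (ω ℓ : MvPolynomial (Fin (n + 1)) K)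
    (hω : ω.IsHomogeneous k) (hℓ : ℓ.IsHomogeneous 1) (hω0 : ω ≠ 0) (hℓ0 : ℓ ≠ 0) :
    (¬ ℓ ∣ ω →
      Module.finrank K ↥(
        Submodule.span K {p : MvPolynomial (Fin (n + 1)) K |
            ∃ θ : MvPolynomial (Fin (n + 1)) K, θ.IsHomogeneous k ∧ p = θ * ℓ ^ (d - k)} ⊓
        Submodule.span K {p : MvPolynomial (Fin (n + 1)) K |
            ∃ lam : MvPolynomial (Fin (n + 1)) K, lam.IsHomogeneous 1 ∧
              p = ω * lam * ℓ ^ (d - k - 1)}) = 1) ∧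
    (ℓ ∣ ω →
      Module.finrank K ↥(
        Submodule.span K {p : MvPolynomial (Fin (n + 1)) K |
            ∃ θ : MvPolynomial (Fin (n + 1)) K, θ.IsHomogeneous k ∧ p = θ * ℓ ^ (d - k)} ⊓
        Submodule.span K {p : MvPolynomial (Fin (n + 1)) K |
            ∃ lam : MvPolynomial (Fin (n + 1)) K, lam.IsHomogeneous 1 ∧
              p = ω * lam * ℓ ^ (d - k - 1)}) = n + 1) :=
  osculating_intersection_dim_general hkd ω ℓ hω hℓ hω0 hℓ0
end

section
/- Let f = ω·ℓ^{d-k} ∈ S_d with ω ∈ S_k, d ≥ k, and ℓ = (ξ, x) for ξ ∈ K^{n+1}. Then the apolar dual functional f* = (1/d!) f(z) ∈ S_d* equals the degree-d part of the series ω^{d,ℓ,v}(z)·e_ℓ(z), where {ℓ, v_1,...,v_n} is any basis of S_1, ω = Σ_{j=0}^k ω_j ℓ^{k-j} with ω_j ∈ S_j(v), ω^{d,ℓ,v} := (1/d!) Σ_j (d-j)! ω_j, and e_ℓ(z) = Σ_m ℓ(z)^m/m!. -/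
open MvPolynomial

/-- `∂^β f`: the iterated partial derivative of `f` prescribed by the multi-index `β`. -/
noncomputable def dpow {K : Type*} [CommSemiring K] {σ : Type*} (β : σ →₀ ℕ)
    (f : MvPolynomial σ K) : MvPolynomial σ K :=
  ∑ α ∈ f.support,
    monomial (α - β) ((∏ i ∈ β.support, ((α i).descFactorial (β i) : K)) * f.coeff α)

/-- `g(∂_x)(f)`: the differential operator obtained substituting `x_i ↦ ∂/∂x_i` in `g`,
applied to `f`. -/
noncomputable def diffOp {K : Type*} [CommSemiring K] {σ : Type*}
    (g f : MvPolynomial σ K) : MvPolynomial σ K :=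
  ∑ β ∈ g.support, g.coeff β • dpow β f

/-- The apolar product `⟨f,g⟩ = (1/d!) g(∂_x)(f)` of two degree-`d` forms. -/
noncomputable def apol {K : Type*} [Field K] {σ : Type*} (d : ℕ)
    (f g : MvPolynomial σ K) : K :=
  (Nat.factorial d : K)⁻¹ * constantCoeff (diffOp g f)

section Aux
variable {K : Type*} [CommSemiring K] {σ : Type*}

lemma coeff_dpow (β γ : σ →₀ ℕ) (f : MvPolynomial σ K) :
    coeff γ (dpow β f) =
      (∏ i ∈ β.support, (((γ + β) i).descFactorial (β i) : K)) * coeff (γ + β) f := by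
  classical
  rw [dpow, coeff_sum]
  simp only [coeff_monomial]
  have key : ∀ α ∈ f.support, α ≠ γ + β →
      (if α - β = γ then (∏ i ∈ β.support, ((α i).descFactorial (β i) : K)) * coeff α f
        else 0) = 0 := by
    intro α _ hne
    split_ifs with hab
    · obtain ⟨i, hi⟩ : ∃ i, α i < β i := by
        by_contra hc
        push_neg at hc
        exact hne (by rw [← hab, tsub_add_cancel_of_le (Finsupp.le_def.mpr hc)])
      have hmem : i ∈ β.support := Finsupp.mem_support_iff.mpr (by omega)
      rw [Finset.prod_eq_zero hmem (by
        rw [Nat.descFactorial_eq_zero_iff_lt.mpr hi, Nat.cast_zero]), zero_mul]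
    · rfl
  by_cases h : γ + β ∈ f.support
  · rw [Finset.sum_eq_single_of_mem _ h key, if_pos (add_tsub_cancel_right γ β)]
  · rw [Finset.sum_eq_zero (fun α hα => key α hα (fun he => h (he ▸ hα))),
      MvPolynomial.notMem_support_iff.mp h, mul_zero]

lemma dpow_zero_left (f : MvPolynomial σ K) : dpow 0 f = f := by
  ext γ; simp [coeff_dpow]

lemma dpow_zero_right (β : σ →₀ ℕ) : dpow β (0 : MvPolynomial σ K) = 0 := by
  ext γ; simp [coeff_dpow]

lemma dpow_add (β : σ →₀ ℕ) (f g : MvPolynomial σ K) :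
    dpow β (f + g) = dpow β f + dpow β g := by
  ext γ; simp [coeff_dpow, mul_add]

lemma dpow_smul (β : σ →₀ ℕ) (c : K) (f : MvPolynomial σ K) :
    dpow β (c • f) = c • dpow β f := by
  ext γ; simp [coeff_dpow]; ring

lemma dpow_sum {ι : Type*} (β : σ →₀ ℕ) (s : Finset ι) (f : ι → MvPolynomial σ K) :
    dpow β (∑ x ∈ s, f x) = ∑ x ∈ s, dpow β (f x) := by
  ext γ; simp [coeff_dpow, Finset.mul_sum, MvPolynomial.coeff_sum]

lemma prod_desc_subset (β α : σ →₀ ℕ) {t : Finset σ} (h : β.support ⊆ t) :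
    ∏ i ∈ t, ((α i).descFactorial (β i) : K)
      = ∏ i ∈ β.support, ((α i).descFactorial (β i) : K) :=
  (Finset.prod_subset h (by
    intro i _ hi
    rw [Finsupp.notMem_support_iff.mp hi, Nat.descFactorial_zero, Nat.cast_one])).symm

lemma desc_comp (a b c : ℕ) :
    (a + b).descFactorial b * (a + b + c).descFactorial c
      = (a + b + c).descFactorial (b + c) := by
  have := Nat.descFactorial_mul_descFactorial (n := a + b + c) (k := c) (m := b + c)
    (Nat.le_add_left _ _)
  simpa [Nat.add_sub_cancel, mul_comm] using this

lemma dpow_dpow (β δ : σ →₀ ℕ) (f : MvPolynomial σ K) :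
    dpow β (dpow δ f) = dpow (β + δ) f := by
  classical
  ext γ
  rw [coeff_dpow, coeff_dpow, coeff_dpow]
  rw [← mul_assoc]
  have h1 : (β + δ).support ⊆ β.support ∪ δ.support := Finsupp.support_add
  rw [← prod_desc_subset (K := K) β (γ + β) Finset.subset_union_left,
    ← prod_desc_subset (K := K) δ (γ + β + δ) Finset.subset_union_right,
    ← prod_desc_subset (K := K) (β + δ) (γ + (β + δ)) h1,
    ← Finset.prod_mul_distrib]
  rw [add_assoc]
  congr 1
  apply Finset.prod_congr rfl
  intro i _
  have : γ i + β i + δ i = (γ + (β + δ)) i := by simp [add_assoc]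
  rw [← Nat.cast_mul]
  congr 1
  simpa [Finsupp.add_apply, add_assoc] using desc_comp (γ i) (β i) (δ i)

lemma diffOp_eq_sum_subset {g : MvPolynomial σ K} {t : Finset (σ →₀ ℕ)}
    (h : g.support ⊆ t) (f : MvPolynomial σ K) :
    diffOp g f = ∑ β ∈ t, g.coeff β • dpow β f :=
  Finset.sum_subset h (fun β _ hβ => by
    rw [MvPolynomial.notMem_support_iff.mp hβ, zero_smul])

lemma diffOp_zero_left (f : MvPolynomial σ K) : diffOp 0 f = 0 := by
  simp [diffOp]

lemma diffOp_add_left (g h f : MvPolynomial σ K) :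
    diffOp (g + h) f = diffOp g f + diffOp h f := by
  classical
  rw [diffOp_eq_sum_subset (t := g.support ∪ h.support)
      MvPolynomial.support_add f,
    diffOp_eq_sum_subset (t := g.support ∪ h.support) Finset.subset_union_left f,
    diffOp_eq_sum_subset (t := g.support ∪ h.support) Finset.subset_union_right f,
    ← Finset.sum_add_distrib]
  exact Finset.sum_congr rfl fun β _ => by rw [coeff_add, add_smul]

lemma diffOp_sum_left {ι : Type*} (s : Finset ι) (g : ι → MvPolynomial σ K)
    (f : MvPolynomial σ K) :
    diffOp (∑ x ∈ s, g x) f = ∑ x ∈ s, diffOp (g x) f := by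
  classical
  induction s using Finset.induction_on with
  | empty => simp [diffOp_zero_left]
  | @insert a s h ih => rw [Finset.sum_insert h, Finset.sum_insert h, diffOp_add_left, ih]

lemma diffOp_smul_left (c : K) (g f : MvPolynomial σ K) :
    diffOp (c • g) f = c • diffOp g f := by
  classical
  rw [diffOp_eq_sum_subset (t := g.support) (MvPolynomial.support_smul) f, diffOp,
    Finset.smul_sum]
  exact Finset.sum_congr rfl fun β _ => by
    rw [MvPolynomial.coeff_smul, smul_eq_mul, mul_smul]

lemma diffOp_add_right (g f₁ f₂ : MvPolynomial σ K) :
    diffOp g (f₁ + f₂) = diffOp g f₁ + diffOp g f₂ := by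
  rw [diffOp, diffOp, diffOp, ← Finset.sum_add_distrib]
  exact Finset.sum_congr rfl fun β _ => by rw [dpow_add, smul_add]

lemma diffOp_monomial (β : σ →₀ ℕ) (c : K) (f : MvPolynomial σ K) :
    diffOp (monomial β c) f = c • dpow β f := by
  classical
  rw [diffOp_eq_sum_subset (t := {β}) (support_monomial_subset) f, Finset.sum_singleton,
    coeff_monomial, if_pos rfl]

lemma diffOp_one (f : MvPolynomial σ K) : diffOp 1 f = f := by
  have : (1 : MvPolynomial σ K) = monomial 0 1 := by simp [monomial_zero']
  rw [this, diffOp_monomial, one_smul, dpow_zero_left]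

lemma diffOp_mul (g h f : MvPolynomial σ K) :
    diffOp (g * h) f = diffOp g (diffOp h f) := by
  induction g using MvPolynomial.induction_on' with
  | add p q hp hq => rw [add_mul, diffOp_add_left, hp, hq, ← diffOp_add_left]
  | monomial β c =>
    induction h using MvPolynomial.induction_on' with
    | add p q hp hq =>
      rw [mul_add, diffOp_add_left, hp, hq, ← diffOp_add_right, ← diffOp_add_left]
    | monomial δ c' =>
      rw [monomial_mul, diffOp_monomial, diffOp_monomial, diffOp_monomial, dpow_smul,
        dpow_dpow, mul_smul]

lemma constantCoeff_dpow (β : σ →₀ ℕ) (f : MvPolynomial σ K) :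
    constantCoeff (dpow β f)
      = (∏ i ∈ β.support, ((β i).factorial : K)) * coeff β f := by
  have : constantCoeff (dpow β f) = coeff 0 (dpow β f) := rfl
  rw [this, coeff_dpow, zero_add]
  simp [Nat.descFactorial_self]

lemma constantCoeff_diffOp (g f : MvPolynomial σ K) {t : Finset (σ →₀ ℕ)}
    (h : g.support ⊆ t) :
    constantCoeff (diffOp g f)
      = ∑ β ∈ t, (∏ i ∈ β.support, ((β i).factorial : K)) * coeff β f * coeff β g := by
  rw [diffOp_eq_sum_subset h f, map_sum]
  exact Finset.sum_congr rfl fun β _ => by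
    rw [MvPolynomial.smul_eq_C_mul, map_mul, constantCoeff_C, constantCoeff_dpow]; ring

lemma constantCoeff_diffOp_comm (g f : MvPolynomial σ K) :
    constantCoeff (diffOp g f) = constantCoeff (diffOp f g) := by
  classical
  rw [constantCoeff_diffOp g f (t := g.support ∪ f.support) Finset.subset_union_left,
    constantCoeff_diffOp f g (t := g.support ∪ f.support) Finset.subset_union_right]
  exact Finset.sum_congr rfl fun β _ => by ring

lemma degree_add' (a b : σ →₀ ℕ) : (a + b).degree = a.degree + b.degree := by
  classical
  have h : ∀ d : σ →₀ ℕ, d.degree = d.sum fun _ n => n := fun d => rfl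
  rw [h, h, h, Finsupp.sum_add_index'] <;> simp

lemma dpow_isHomogeneous {f : MvPolynomial σ K} {m : ℕ} (hf : f.IsHomogeneous m)
    (β : σ →₀ ℕ) : (dpow β f).IsHomogeneous (m - β.degree) := by
  intro γ hγ
  rw [coeff_dpow] at hγ
  have h2 : coeff (γ + β) f ≠ 0 := fun h => hγ (by rw [h, mul_zero])
  have h3 := hf h2
  rw [show Finsupp.weight (1 : σ → ℕ) = Finsupp.degree from Finsupp.degree_eq_weight_one.symm] at h3 ⊢
  rw [degree_add'] at h3
  omega

lemma diffOp_isHomogeneous {g f : MvPolynomial σ K} {j m : ℕ}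
    (hg : g.IsHomogeneous j) (hf : f.IsHomogeneous m) :
    (diffOp g f).IsHomogeneous (m - j) := by
  apply MvPolynomial.IsHomogeneous.sum
  intro β hβ
  have hdeg : β.degree = j := by
    have := hg (MvPolynomial.mem_support_iff.mp hβ)
    rwa [show Finsupp.weight (1 : σ → ℕ) = Finsupp.degree from Finsupp.degree_eq_weight_one.symm] at this
  rw [MvPolynomial.smul_eq_C_mul]
  exact (hdeg ▸ dpow_isHomogeneous hf β).C_mul _

end Aux

section Field
variable {K : Type*} [Field K] [CharZero K] {σ : Type*} [Fintype σ] [DecidableEq σ]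

lemma dpow_monomial (β α : σ →₀ ℕ) (c : K) :
    dpow β (monomial α c)
      = monomial (α - β) ((∏ i ∈ β.support, ((α i).descFactorial (β i) : K)) * c) := by
  classical
  rcases eq_or_ne c 0 with rfl | hc
  · simp [dpow_zero_right]
  · rw [dpow, support_monomial, if_neg hc, Finset.sum_singleton, coeff_monomial, if_pos rfl]

lemma euler_mono (α : σ →₀ ℕ) (c : K) :
    ∑ i : σ, X i * dpow (Finsupp.single i 1) (monomial α c)
      = (α.degree : K) • monomial α c := by
  have step : ∀ i : σ, X i * dpow (Finsupp.single i 1) (monomial α c)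
      = monomial α ((α i : K) * c) := by
    intro i
    rw [dpow_monomial]
    have hsupp : (Finsupp.single i 1).support = {i} := Finsupp.support_single_ne_zero i one_ne_zero
    rw [hsupp, Finset.prod_singleton, Finsupp.single_apply, if_pos rfl,
      Nat.descFactorial_one]
    rcases Nat.eq_zero_or_pos (α i) with h0 | hpos
    · rw [h0]; simp
    · have : X i * monomial (α - Finsupp.single i 1) ((α i : K) * c)
          = monomial (Finsupp.single i 1 + (α - Finsupp.single i 1)) ((α i : K) * c) := by
        rw [X, monomial_mul, one_mul]
      rw [this, add_tsub_cancel_of_le (Finsupp.single_le_iff.mpr hpos)]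
  have hdeg : ∑ i : σ, α i = α.degree := by
    classical
    rw [Finsupp.degree]
    exact (Finset.sum_subset (Finset.subset_univ _) (fun i _ hi =>
      Finsupp.notMem_support_iff.mp hi)).symm
  rw [Finset.sum_congr rfl fun i _ => step i, ← map_sum, ← Finset.sum_mul, ← Nat.cast_sum,
    hdeg, MvPolynomial.smul_monomial, smul_eq_mul]

set_option linter.unusedSectionVars false

lemma euler_poly {q : MvPolynomial σ K} {m : ℕ} (hq : q.IsHomogeneous m) :
    ∑ i : σ, X i * dpow (Finsupp.single i 1) q = (m : K) • q := by
  classical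
  conv_lhs => rw [q.as_sum]
  rw [Finset.sum_congr rfl fun i (_ : i ∈ Finset.univ) => by
    rw [dpow_sum, Finset.mul_sum]]
  rw [Finset.sum_comm]
  conv_rhs => rw [q.as_sum, Finset.smul_sum]
  apply Finset.sum_congr rfl
  intro α hα
  rw [euler_mono]
  have : α.degree = m := by
    have := hq (MvPolynomial.mem_support_iff.mp hα)
    rwa [show Finsupp.weight (1 : σ → ℕ) = Finsupp.degree from Finsupp.degree_eq_weight_one.symm] at this
  rw [this]

lemma euler_eval (ξ : σ → K) {q : MvPolynomial σ K} {m : ℕ} (hq : q.IsHomogeneous m) :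
    eval ξ (diffOp (∑ i : σ, C (ξ i) * X i) q) = (m : K) * eval ξ q := by
  have h1 : diffOp (∑ i : σ, C (ξ i) * X i) q
      = ∑ i : σ, ξ i • dpow (Finsupp.single i 1) q := by
    rw [diffOp_sum_left]
    apply Finset.sum_congr rfl
    intro i _
    rw [show (C (ξ i) * X i : MvPolynomial σ K) = monomial (Finsupp.single i 1) (ξ i) by
      rw [X, C_mul_monomial, mul_one], diffOp_monomial]
  have h2 := congrArg (eval ξ) (euler_poly hq)
  rw [map_sum] at h2
  rw [h1, map_sum]
  calc ∑ i : σ, eval ξ (ξ i • dpow (Finsupp.single i 1) q)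
      = ∑ i : σ, eval ξ (X i * dpow (Finsupp.single i 1) q) := by
        apply Finset.sum_congr rfl
        intro i _
        rw [MvPolynomial.smul_eq_C_mul, map_mul, map_mul, eval_C, eval_X]
    _ = (m : K) * eval ξ q := by
        rw [h2, MvPolynomial.smul_eq_C_mul, map_mul, eval_C]

lemma key_lemma (ξ : σ → K) : ∀ (m : ℕ) (q : MvPolynomial σ K), q.IsHomogeneous m →
    constantCoeff (diffOp ((∑ i : σ, C (ξ i) * X i) ^ m) q)
      = (m.factorial : K) * eval ξ q := by
  intro m
  induction m with
  | zero =>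
    intro q hq
    rw [pow_zero, diffOp_one]
    have hC : q = C (constantCoeff q) := by
      ext γ
      rcases eq_or_ne γ 0 with rfl | hγ
      · simp [constantCoeff_eq]
      · rw [hq.coeff_eq_zero (by
          rw [Ne, Finsupp.degree_eq_zero_iff]; exact hγ), coeff_C, if_neg (Ne.symm hγ)]
    conv_rhs => rw [hC]
    simp
  | succ m ih =>
    intro q hq
    have hl : (∑ i : σ, C (ξ i) * X i : MvPolynomial σ K).IsHomogeneous 1 :=
      MvPolynomial.IsHomogeneous.sum _ _ _ fun i _ => isHomogeneous_C_mul_X _ _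
    have h1 : (diffOp (∑ i : σ, C (ξ i) * X i) q).IsHomogeneous m := by
      have := diffOp_isHomogeneous hl hq
      simpa using this
    rw [pow_succ, diffOp_mul, ih _ h1, euler_eval ξ hq, Nat.factorial_succ]
    push_cast
    ring

end Field

section Aeval

variable {K : Type*} [CommSemiring K] {σ τ : Type*}

lemma aeval_isHomogeneous (v : σ → MvPolynomial τ K) (hv : ∀ i, (v i).IsHomogeneous 1)
    {θ : MvPolynomial σ K} {j : ℕ} (hθ : θ.IsHomogeneous j) :
    (aeval v θ).IsHomogeneous j := by
  conv_lhs => rw [θ.as_sum]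
  rw [map_sum]
  apply MvPolynomial.IsHomogeneous.sum
  intro α hα
  have hdeg : α.degree = j := by
    have := hθ (MvPolynomial.mem_support_iff.mp hα)
    rwa [show Finsupp.weight (1 : σ → ℕ) = Finsupp.degree from Finsupp.degree_eq_weight_one.symm] at this
  rw [aeval_monomial]
  have : (Finsupp.prod α fun i e => v i ^ e).IsHomogeneous j := by
    rw [Finsupp.prod, ← hdeg, Finsupp.degree]
    exact MvPolynomial.IsHomogeneous.prod _ _ _ fun i _ => by
      simpa using (hv i).pow (α i)
  simpa [algebraMap_eq] using this.C_mul (coeff α θ)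

end Aeval

/-- Let `f = ω ℓ^{d-k}` with `ω ∈ S_k`, `d ≥ k` and `ℓ = (ξ,x)`.
Write `ω = ∑_{j=0}^k ω_j ℓ^{k-j}` with `ω_j ∈ S_j(v)` for a basis `{ℓ, v_1, …, v_n}` of
`S_1`, and set `ω^{d,ℓ,v} = (1/d!) ∑_j (d-j)! ω_j`. Then the apolar dual `f*` coincides,
on degree-`d` forms, with the degree-`d` part of the series `ω^{d,ℓ,v}(z) e_ℓ(z)`, i.e.
`⟨f*, p⟩ = (ω^{d,ℓ,v}(∂_x)p)(ξ)` for every `p` homogeneous of degree `d`. -/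
theorem dual_eq_polyExp_degree_part {K : Type*} [Field K] [CharZero K] {n d k : ℕ}
    (hkd : k ≤ d) (ξ : Fin (n + 1) → K)
    (v : Fin n → MvPolynomial (Fin (n + 1)) K) (hv : ∀ i, (v i).IsHomogeneous 1)
    (hbasis : LinearIndependent K
      (Fin.cons (∑ i, C (ξ i) * X i) v : Fin (n + 1) → MvPolynomial (Fin (n + 1)) K))
    (ω : MvPolynomial (Fin (n + 1)) K) (hω : ω.IsHomogeneous k)
    (θ : ℕ → MvPolynomial (Fin n) K) (hθ : ∀ j, (θ j).IsHomogeneous j)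
    (hdec : ω = ∑ j ∈ Finset.range (k + 1),
      aeval v (θ j) * (∑ i, C (ξ i) * X i) ^ (k - j)) :
    ∀ p : MvPolynomial (Fin (n + 1)) K, p.IsHomogeneous d →
      apol d (ω * (∑ i, C (ξ i) * X i) ^ (d - k)) p
        = eval ξ (diffOp ((Nat.factorial d : K)⁻¹ •
            ∑ j ∈ Finset.range (k + 1), (Nat.factorial (d - j) : K) • aeval v (θ j)) p) := by
  intro p hp
  have hg : ∀ j, (aeval v (θ j)).IsHomogeneous j := fun j =>
    aeval_isHomogeneous v hv (hθ j)
  have hf : ω * (∑ i, C (ξ i) * X i) ^ (d - k)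
      = ∑ j ∈ Finset.range (k + 1), aeval v (θ j) * (∑ i, C (ξ i) * X i) ^ (d - j) := by
    rw [hdec, Finset.sum_mul]
    apply Finset.sum_congr rfl
    intro j hj
    rw [mul_assoc, ← pow_add]
    have hjk : j ≤ k := Nat.lt_succ_iff.mp (Finset.mem_range.mp hj)
    congr 2
    omega
  rw [apol, constantCoeff_diffOp_comm, hf, diffOp_sum_left, map_sum]
  have hterm : ∀ j ∈ Finset.range (k + 1),
      constantCoeff (diffOp (aeval v (θ j) * (∑ i, C (ξ i) * X i) ^ (d - j)) p)
        = ((d - j).factorial : K) * eval ξ (diffOp (aeval v (θ j)) p) := by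
    intro j _
    rw [mul_comm, diffOp_mul]
    exact key_lemma ξ (d - j) _ (diffOp_isHomogeneous (hg j) hp)
  rw [Finset.sum_congr rfl hterm]
  rw [diffOp_smul_left, diffOp_sum_left, MvPolynomial.smul_eq_C_mul, map_mul, eval_C]
  congr 1
  rw [map_sum]
  apply Finset.sum_congr rfl
  intro j _
  rw [diffOp_smul_left, MvPolynomial.smul_eq_C_mul, map_mul, eval_C]
end
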